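/- For every permutation π = π_1⋯π_n ∈ S_n with a tail-bound descent d, the fertility of π satisfies |s^{-1}(π)| = Σ_{H ∈ SW_d(π)} |s^{-1}(π_U^H)| · |s^{-1}(π_S^H)| (the Decomposition Lemma). -/

import Mathlib

/-- West's stack-sorting map, implemented with fuel (fuel = length suffices). -/
def ssAux : ℕ → List ℕ → List ℕ
  | 0, _ => []
  | _ + 1, [] => []
  | fuel + 1, l =>
    let m := l.foldr max 0
    let i := l.idxOf m
    ssAux fuel (l.take i) ++ ssAux fuel (l.drop (i + 1)) ++ [m]

/-- West's stack-sorting map `s`. -/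
def stackSort (l : List ℕ) : List ℕ := ssAux l.length l

/-- `σ` contains the classical pattern `τ`. -/
def Contains (τ σ : List ℕ) : Prop :=
  ∃ f : Fin τ.length → Fin σ.length, StrictMono f ∧
    ∀ i j : Fin τ.length, τ.get i < τ.get j ↔ σ.get (f i) < σ.get (f j)

/-- `σ` avoids the classical pattern `τ`. -/
def Avoids (σ τ : List ℕ) : Prop := ¬ Contains τ σ

/-- The tail length of a permutation `π` of `[n]` (as a list, 1-indexed entries): the
smallest `ℓ ≥ 0` such that `π_{n-ℓ} ≠ n-ℓ`, with the tail length of the identity equal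
to `n`. -/
noncomputable def tailLen (n : ℕ) (π : List ℕ) : ℕ :=
  sInf {ℓ : ℕ | ℓ = n ∨ π.getD (n - ℓ - 1) 0 ≠ n - ℓ}

/-- The fertility of `π`: the number of preimages of `π` under the stack-sorting map. -/
noncomputable def fert (π : List ℕ) : ℕ := Nat.card {σ : List ℕ // stackSort σ = π}

/-!
If `m` exceeds every entry of `u`, the preimages of `u ++ [m]` are the lists `L ++ m :: R` with
`s L ++ s R = u`, so `fert (u ++ [m]) = ∑ₖ fert (u.take k) * fert (u.drop k)`; and `fert π = 0`
when `π` does not end in its maximum. Write `π = a ++ x :: b ++ c` with `x = π_d`, `c` the tail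
and `b` the nonempty block between them, all of whose entries lie below `x` because `d` is a
tail-bound descent. Both sides of the Decomposition Lemma then satisfy the same recurrence in `c`:
splitting `π` and each `π_U^H` at the position of their maximum gives matching terms, and the
splits falling strictly inside `b` vanish because the prefix ends below `x`. For `c = []` both
sides are `0`.
-/

open Finset

lemma ssAux_succ_of_ne_nil (f : ℕ) {l : List ℕ} (hl : l ≠ []) :
    ssAux (f + 1) l = ssAux f (l.take (l.idxOf (l.foldr max 0))) ++
      ssAux f (l.drop (l.idxOf (l.foldr max 0) + 1)) ++ [l.foldr max 0] := by
  cases l with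
  | nil => exact absurd rfl hl
  | cons => rfl

lemma foldr_max_mem {l : List ℕ} (hl : l ≠ []) : l.foldr max 0 ∈ l :=
  List.maximum_mem (List.foldr_max_of_ne_nil hl).symm

lemma eq_take_idxOf_append_cons {α : Type*} [DecidableEq α] {l : List α} {x : α}
    (hx : x ∈ l) :
    l = l.take (l.idxOf x) ++ x :: l.drop (l.idxOf x + 1) := by
  have hi := List.idxOf_lt_length_of_mem hx
  conv_lhs => rw [← List.take_append_drop (l.idxOf x) l, List.drop_eq_getElem_cons hi,
    List.getElem_idxOf hi]

lemma ssAux_perm {f : ℕ} {l : List ℕ} (hl : l.length ≤ f) : (ssAux f l).Perm l := by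
  induction f generalizing l with
  | zero => simp [List.length_eq_zero_iff.mp (Nat.le_zero.mp hl), ssAux]
  | succ f ih =>
    rcases eq_or_ne l [] with rfl | hne
    · rfl
    have hm := foldr_max_mem hne
    have hi := List.idxOf_lt_length_of_mem hm
    rw [ssAux_succ_of_ne_nil f hne]
    refine (((ih (by rw [List.length_take]; omega)).append
      (ih (by rw [List.length_drop]; omega))).append_right _).trans ?_
    conv_rhs => rw [eq_take_idxOf_append_cons hm]
    simpa only [List.append_assoc] using (List.perm_append_singleton _ _).append_left _

lemma ssAux_eq_ssAux {f g : ℕ} {l : List ℕ} (hf : l.length ≤ f) (hg : l.length ≤ g) :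
    ssAux f l = ssAux g l := by
  induction f generalizing g l with
  | zero =>
    rw [List.length_eq_zero_iff.mp (Nat.le_zero.mp hf)]
    cases g <;> rfl
  | succ f ih =>
    rcases eq_or_ne l [] with rfl | hne
    · cases g <;> rfl
    obtain ⟨g, rfl⟩ : ∃ g', g = g' + 1 := Nat.exists_eq_succ_of_ne_zero (by
      rintro rfl; exact hne (List.length_eq_zero_iff.mp (Nat.le_zero.mp hg)))
    have hi := List.idxOf_lt_length_of_mem (foldr_max_mem hne)
    rw [ssAux_succ_of_ne_nil f hne, ssAux_succ_of_ne_nil g hne,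
      ih (g := g) (by rw [List.length_take]; omega) (by rw [List.length_take]; omega),
      ih (g := g) (by rw [List.length_drop]; omega) (by rw [List.length_drop]; omega)]

lemma ssAux_eq_stackSort {f : ℕ} {l : List ℕ} (h : l.length ≤ f) : ssAux f l = stackSort l :=
  ssAux_eq_ssAux h le_rfl

lemma stackSort_of_ne_nil {l : List ℕ} (hl : l ≠ []) :
    stackSort l = stackSort (l.take (l.idxOf (l.foldr max 0))) ++
      stackSort (l.drop (l.idxOf (l.foldr max 0) + 1)) ++ [l.foldr max 0] := by
  obtain ⟨f, hf⟩ : ∃ f, l.length = f + 1 :=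
    Nat.exists_eq_succ_of_ne_zero (mt List.length_eq_zero_iff.mp hl)
  have hi := List.idxOf_lt_length_of_mem (foldr_max_mem hl)
  rw [stackSort, hf, ssAux_succ_of_ne_nil f hl, ssAux_eq_stackSort (by rw [List.length_take]; omega),
    ssAux_eq_stackSort (by rw [List.length_drop]; omega)]

lemma stackSort_perm (l : List ℕ) : (stackSort l).Perm l := ssAux_perm le_rfl

lemma stackSort_append_cons {L R : List ℕ} {m : ℕ} (hL : ∀ y ∈ L, y < m)
    (hR : ∀ y ∈ R, y < m) : stackSort (L ++ m :: R) = stackSort L ++ stackSort R ++ [m] := by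
  have hmax : (L ++ m :: R).foldr max 0 = m := by
    refine le_antisymm (List.max_le_of_forall_le _ _ fun y hy => ?_)
      (List.le_max_of_le (List.mem_append_right _ List.mem_cons_self) le_rfl)
    rcases List.mem_append.mp hy with hy | hy | hy
    exacts [(hL y hy).le, le_rfl, (hR y ‹_›).le]
  have hidx : (L ++ m :: R).idxOf m = L.length := by
    rw [List.idxOf_append_of_notMem fun h => (hL m h).false, List.idxOf_cons_self, add_zero]
  rw [stackSort_of_ne_nil (by simp), hmax, hidx, List.take_left]
  simp

lemma finite_stackSort_preimage (π : List ℕ) : Finite {σ : List ℕ // stackSort σ = π} :=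
  Set.Finite.subset π.permutations.finite_toSet fun σ (h : stackSort σ = π) =>
    List.mem_permutations.mpr (h ▸ stackSort_perm σ).symm

lemma fert_append_singleton_eq_zero {l : List ℕ} {y z : ℕ} (hz : z ∈ l) (hyz : y < z) :
    fert (l ++ [y]) = 0 := by
  refine Nat.card_eq_zero.mpr (Or.inl ⟨fun ⟨σ, hσ⟩ => ?_⟩)
  have hσ_ne : σ ≠ [] := by rintro rfl; simp [stackSort, ssAux] at hσ
  have hlast := hσ ▸ stackSort_of_ne_nil hσ_ne
  obtain ⟨-, hy⟩ := List.append_inj' hlast rfl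
  obtain rfl := List.singleton_inj.mp hy
  have hzσ : z ∈ σ := (hσ ▸ stackSort_perm σ).subset (List.mem_append_left _ hz)
  exact (List.le_max_of_le hzσ le_rfl).not_gt hyz

lemma exists_eq_append_cons_of_stackSort_eq {σ u : List ℕ} {m : ℕ}
    (h : stackSort σ = u ++ [m]) : ∃ L R, σ = L ++ m :: R ∧ (L ++ R).Perm u := by
  have hperm : σ.Perm (u ++ [m]) := h ▸ (stackSort_perm σ).symm
  have hm : m ∈ σ := hperm.symm.subset (by simp)
  refine ⟨_, _, eq_take_idxOf_append_cons hm, List.Perm.cons_inv (a := m) ?_⟩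
  rw [eq_take_idxOf_append_cons hm] at hperm
  exact List.perm_middle.symm.trans (hperm.trans (List.perm_append_singleton _ _))

lemma fert_append_singleton {u : List ℕ} {m : ℕ} (hu : ∀ y ∈ u, y < m) :
    fert (u ++ [m]) = ∑ k ∈ range (u.length + 1), fert (u.take k) * fert (u.drop k) := by
  have hlt : ∀ {L v : List ℕ}, stackSort L = v → v.Sublist u → ∀ y ∈ L, y < m :=
    fun hL hv y hy => hu y (hv.subset ((hL ▸ stackSort_perm _).mem_iff.mpr hy))
  let Φ : (Σ k : Fin (u.length + 1),
      {L // stackSort L = u.take k} × {R // stackSort R = u.drop k}) →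
      {σ // stackSort σ = u ++ [m]} := fun ⟨k, L, R⟩ =>
    ⟨L.1 ++ m :: R.1, by
      rw [stackSort_append_cons (hlt L.2 (List.take_sublist _ _))
        (hlt R.2 (List.drop_sublist _ _)), L.2, R.2, List.take_append_drop]⟩
  have hΦ : Function.Bijective Φ := by
    constructor
    · rintro ⟨k, ⟨L, hL⟩, ⟨R, hR⟩⟩ ⟨k', ⟨L', hL'⟩, ⟨R', hR'⟩⟩ h
      obtain ⟨rfl, -, rfl⟩ := (List.append_cons_inj_of_notMem
        (fun h => (hlt hL (List.take_sublist _ _) m h).false)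
        (fun h => (hlt hR (List.drop_sublist _ _) m h).false)).mp (Subtype.ext_iff.mp h)
      obtain rfl : k = k' := Fin.ext <| by
        have := congrArg List.length (hL.symm.trans hL')
        simp only [List.length_take] at this
        omega
      rfl
    · rintro ⟨σ, hσ⟩
      obtain ⟨L, R, rfl, hLR⟩ := exists_eq_append_cons_of_stackSort_eq hσ
      have hLRu : stackSort L ++ stackSort R = u := by
        have hm : ∀ y ∈ L ++ R, y < m := fun y hy => hu y (hLR.subset hy)
        rw [stackSort_append_cons (fun y hy => hm y (by simp [hy]))
          (fun y hy => hm y (by simp [hy]))] at hσ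
        exact List.append_cancel_right hσ
      have hlen : L.length ≤ u.length := by
        rw [← hLRu, List.length_append, (stackSort_perm L).length_eq]; omega
      refine ⟨⟨⟨L.length, by omega⟩, ⟨L, ?_⟩, ⟨R, ?_⟩⟩, rfl⟩
      · change stackSort L = u.take L.length
        rw [← hLRu, ← (stackSort_perm L).length_eq, List.take_left]
      · change stackSort R = u.drop L.length
        rw [← hLRu, ← (stackSort_perm L).length_eq, List.drop_left]
  have := finite_stackSort_preimage
  rw [fert, ← Nat.card_congr (Equiv.ofBijective Φ hΦ), Nat.card_sigma,
    Fin.sum_univ_eq_sum_range (fun k => Nat.card ({L // stackSort L = u.take k} ×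
      {R // stackSort R = u.drop k}))]
  simp only [Nat.card_prod, fert]

lemma sum_range_take_drop_append {α M : Type*} [AddCommMonoid M] (g : List α → List α → M)
    (p q : List α) :
    ∑ k ∈ range ((p ++ q).length + 1), g ((p ++ q).take k) ((p ++ q).drop k) =
      ∑ k ∈ range p.length, g (p.take k) (p.drop k ++ q) +
        ∑ k ∈ range (q.length + 1), g (p ++ q.take k) (q.drop k) := by
  rw [List.length_append, add_assoc, Finset.sum_range_add]
  congr 1
  · refine Finset.sum_congr rfl fun k hk => ?_
    have hk : k ≤ p.length := (Finset.mem_range.mp hk).le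
    rw [List.take_append_of_le_length hk, List.drop_append_of_le_length hk]
  · simp only [List.take_length_add_append, List.drop_length_add_append]

lemma sum_range_sum_range_sub_comm {M : Type*} [AddCommMonoid M] (N : ℕ) (f : ℕ → ℕ → M) :
    ∑ i ∈ range N, ∑ r ∈ range (N - i), f i (i + 1 + r) =
      ∑ s ∈ range (N + 1), ∑ i ∈ range s, f i s := by
  have h := Finset.sum_Ico_Ico_comm' 0 (N + 1) f
  rw [← Finset.range_eq_Ico, Finset.sum_range_succ, Finset.Ico_self, Finset.sum_empty,
    add_zero] at h
  simp only [← Finset.range_eq_Ico] at h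
  rw [← h]
  refine Finset.sum_congr rfl fun i hi => ?_
  rw [Finset.sum_Ico_eq_sum_range, Nat.add_sub_add_right]

lemma fert_append_cons_eq_zero {a b : List ℕ} {x : ℕ} (hb : b ≠ [])
    (hbx : ∀ y ∈ b, y < x) :
    fert (a ++ x :: b) = 0 := by
  obtain ⟨b, y, rfl⟩ := (List.eq_nil_or_concat' b).resolve_left hb
  have := fert_append_singleton_eq_zero (l := a ++ x :: b) (by simp) (hbx y (by simp))
  simpa using this

lemma fert_append_cons_append_singleton {a l : List ℕ} {x m : ℕ}
    (hm : ∀ y ∈ a ++ x :: l, y < m) :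
    fert (a ++ x :: l ++ [m]) =
      ∑ k ∈ range (a.length + 1), fert (a.take k) * fert (a.drop k ++ x :: l) +
        ∑ s ∈ range (l.length + 1), fert (a ++ x :: l.take s) * fert (l.drop s) := by
  rw [show a ++ x :: l ++ [m] = a ++ [x] ++ l ++ [m] by simp,
    fert_append_singleton (by simpa using hm),
    sum_range_take_drop_append (fun s t => fert s * fert t), List.length_append,
    List.length_singleton]
  congr 1
  · refine Finset.sum_congr rfl fun k hk => ?_
    have hk : k ≤ a.length := Nat.lt_succ_iff.mp (Finset.mem_range.mp hk)
    rw [List.take_append_of_le_length hk, List.drop_append_of_le_length hk]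
    simp
  · simp

/-- For `π = a ++ x :: b ++ c`, the right-hand side of the Decomposition Lemma, restricted to
the hooks from `x` to an entry `c[i]` of `c`: there `π_U^H = a ++ x :: c.drop (i + 1)` and
`π_S^H = b ++ c.take i`. -/
noncomputable def hookSum (a : List ℕ) (x : ℕ) (b c : List ℕ) : ℕ :=
  ∑ i ∈ range c.length, fert (a ++ x :: c.drop (i + 1)) * fert (b ++ c.take i)

lemma fert_append_cons_append_concat {a b c : List ℕ} {x m : ℕ} (hb : b ≠ [])
    (hbx : ∀ y ∈ b, y < x) (hm : ∀ y ∈ a ++ x :: (b ++ c), y < m) :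
    fert (a ++ x :: b ++ (c ++ [m])) =
      ∑ k ∈ range (a.length + 1), fert (a.take k) * fert (a.drop k ++ x :: b ++ c) +
        fert (a ++ [x]) * fert (b ++ c) +
        ∑ s ∈ range (c.length + 1), fert (a ++ x :: b ++ c.take s) * fert (c.drop s) := by
  rw [show a ++ x :: b ++ (c ++ [m]) = a ++ x :: (b ++ c) ++ [m] by simp,
    fert_append_cons_append_singleton hm,
    sum_range_take_drop_append (fun s t => fert (a ++ x :: s) * fert t) b c, add_assoc]
  have hzero : ∑ k ∈ range b.length, fert (a ++ x :: b.take k) * fert (b.drop k ++ c) =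
      fert (a ++ [x]) * fert (b ++ c) := by
    rw [Finset.sum_eq_single_of_mem 0 (Finset.mem_range.mpr (List.length_pos_of_ne_nil hb))]
    · simp
    · intro k hk hk0
      rw [fert_append_cons_eq_zero (by simp [hk0, hb]) fun y hy =>
        hbx y (List.mem_of_mem_take hy), zero_mul]
  simp [hzero]

lemma hookSum_concat {a b c : List ℕ} {x m : ℕ} (hm : ∀ y ∈ a ++ x :: c, y < m) :
    hookSum a x b (c ++ [m]) =
      ∑ k ∈ range (a.length + 1), fert (a.take k) * hookSum (a.drop k) x b c +
        fert (a ++ [x]) * fert (b ++ c) +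
        ∑ s ∈ range (c.length + 1), hookSum a x b (c.take s) * fert (c.drop s) := by
  have hsplit : ∀ i ∈ range c.length,
      fert (a ++ x :: (c ++ [m]).drop (i + 1)) * fert (b ++ (c ++ [m]).take i) =
        ∑ k ∈ range (a.length + 1),
          fert (a.take k) * (fert (a.drop k ++ x :: c.drop (i + 1)) * fert (b ++ c.take i)) +
        ∑ r ∈ range (c.length - i),
          fert (a ++ x :: (c.take (i + 1 + r)).drop (i + 1)) * fert (b ++ c.take i) *
            fert (c.drop (i + 1 + r)) := by
    intro i hi
    have hi : i < c.length := Finset.mem_range.mp hi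
    rw [List.drop_append_of_le_length hi, List.take_append_of_le_length hi.le,
      ← List.cons_append, ← List.append_assoc,
      fert_append_cons_append_singleton fun y hy =>
        hm y ((by simpa using List.drop_sublist _ _ : List.Sublist _ _).subset hy),
      add_mul, Finset.sum_mul, Finset.sum_mul, List.length_drop,
      show c.length - (i + 1) + 1 = c.length - i by omega]
    congr 1
    · simp only [mul_assoc]
    · refine Finset.sum_congr rfl fun r _ => ?_
      rw [List.drop_take, List.drop_drop, Nat.add_sub_cancel_left, mul_right_comm]
  rw [hookSum, List.length_append, List.length_singleton, Finset.sum_range_succ,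
    Finset.sum_congr rfl hsplit, Finset.sum_add_distrib, Finset.sum_comm,
    sum_range_sum_range_sub_comm c.length fun i s =>
      fert (a ++ x :: (c.take s).drop (i + 1)) * fert (b ++ c.take i) * fert (c.drop s)]
  have hlast : fert (a ++ x :: (c ++ [m]).drop (c.length + 1)) *
      fert (b ++ (c ++ [m]).take c.length) = fert (a ++ [x]) * fert (b ++ c) := by
    simp
  have hinner : ∀ s ∈ range (c.length + 1), hookSum a x b (c.take s) * fert (c.drop s) =
      ∑ i ∈ range s, fert (a ++ x :: (c.take s).drop (i + 1)) * fert (b ++ c.take i) *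
        fert (c.drop s) := by
    intro s hs
    have hs : s ≤ c.length := Nat.lt_succ_iff.mp (Finset.mem_range.mp hs)
    rw [hookSum, List.length_take_of_le hs, Finset.sum_mul]
    refine Finset.sum_congr rfl fun i hi => ?_
    rw [List.take_take, min_eq_left (Finset.mem_range.mp hi).le]
  rw [hlast, Finset.sum_congr rfl hinner, add_right_comm]
  simp only [hookSum, Finset.mul_sum]

theorem fert_append_cons_append_eq_hookSum {a b c : List ℕ} {x : ℕ} (hb : b ≠ [])
    (hbx : ∀ y ∈ b, y < x) (hc : c.Pairwise (· < ·))
    (hlt : ∀ y ∈ a ++ x :: b, ∀ z ∈ c, y < z) :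
    fert (a ++ x :: b ++ c) = hookSum a x b c := by
  induction hn : c.length using Nat.strong_induction_on generalizing a c with
  | _ n ih =>
  subst hn
  rcases List.eq_nil_or_concat' c with rfl | ⟨c, m, rfl⟩
  · simp [hookSum, fert_append_cons_eq_zero hb hbx]
  obtain ⟨hc, -, hcm⟩ := List.pairwise_append.mp hc
  have hm : ∀ y ∈ a ++ x :: (b ++ c), y < m := by
    intro y hy
    rcases List.mem_append.mp (show y ∈ a ++ x :: b ++ c by simpa using hy) with hy | hy
    exacts [hlt y hy m (by simp), hcm y hy m (by simp)]
  have ih_drop : ∀ k, fert (a.drop k ++ x :: b ++ c) = hookSum (a.drop k) x b c :=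
    fun k => ih _ (by simp) hc (fun y hy z hz =>
      hlt y (((List.drop_sublist k a).append_right _).subset hy) z (by simp [hz])) rfl
  have ih_take : ∀ s, fert (a ++ x :: b ++ c.take s) = hookSum a x b (c.take s) :=
    fun s => ih _ (by simp) (hc.sublist (List.take_sublist _ _)) (fun y hy z hz =>
      hlt y hy z (by simp [List.mem_of_mem_take hz])) rfl
  rw [fert_append_cons_append_concat hb hbx hm,
    hookSum_concat fun y hy => hm y (by simp only [List.mem_append, List.mem_cons] at hy ⊢; tauto)]
  simp only [ih_drop, ih_take]

lemma tailLen_le (n : ℕ) (π : List ℕ) : tailLen n π ≤ n := Nat.sInf_le (Or.inl rfl)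

lemma getD_of_sub_tailLen_le {n : ℕ} {π : List ℕ} {i : ℕ} (hi : n - tailLen n π ≤ i)
    (hin : i < n) : π.getD i 0 = i + 1 := by
  have hnot : n - 1 - i ∉ {ℓ : ℕ | ℓ = n ∨ π.getD (n - ℓ - 1) 0 ≠ n - ℓ} := fun hmem => by
    have := Nat.sInf_le hmem
    rw [← tailLen] at this
    omega
  simp only [Set.mem_ofPred_eq, not_or, not_not] at hnot
  rw [show n - (n - 1 - i) - 1 = i by omega, show n - (n - 1 - i) = i + 1 by omega] at hnot
  exact hnot.2

lemma drop_sub_tailLen {n : ℕ} {π : List ℕ} (hlen : π.length = n) :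
    π.drop (n - tailLen n π) = List.range' (n - tailLen n π + 1) (tailLen n π) := by
  have ht := tailLen_le n π
  refine List.ext_getElem (by rw [List.length_drop, List.length_range']; omega) fun i h₁ h₂ => ?_
  rw [List.getElem_drop, List.getElem_range', ← List.getD_eq_getElem _ 0,
    getD_of_sub_tailLen_le (n := n) (by omega) (by rw [List.length_drop] at h₁; omega)]
  omega

lemma take_sub_tailLen_perm {n : ℕ} {π : List ℕ} (hπ : π.Perm (List.range' 1 n)) :
    (π.take (n - tailLen n π)).Perm (List.range' 1 (n - tailLen n π)) := by
  have ht := tailLen_le n π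
  rw [← List.perm_append_right_iff (π.drop (n - tailLen n π)), List.take_append_drop,
    drop_sub_tailLen (by simpa using hπ.length_eq),
    show n - tailLen n π + 1 = 1 + 1 * (n - tailLen n π) by omega, List.range'_append,
    show n - tailLen n π + tailLen n π = n by omega]
  exact hπ

lemma lt_of_mem_take_of_mem_drop_sub_tailLen {n : ℕ} {π : List ℕ}
    (hπ : π.Perm (List.range' 1 n)) :
    ∀ y ∈ π.take (n - tailLen n π), ∀ z ∈ π.drop (n - tailLen n π), y < z := by
  intro y hy z hz
  rw [drop_sub_tailLen (by simpa using hπ.length_eq), List.mem_range'_1] at hz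
  have := List.mem_range'_1.mp ((take_sub_tailLen_perm hπ).subset hy)
  omega

lemma getD_lt_getD_of_sub_tailLen_le {n : ℕ} {π : List ℕ} (hπ : π.Perm (List.range' 1 n))
    {i j : ℕ} (hij : i < j) (hj : n - tailLen n π ≤ j) (hjn : j < n) :
    π.getD i 0 < π.getD j 0 := by
  have hlen : π.length = n := by simpa using hπ.length_eq
  by_cases hi : n - tailLen n π ≤ i
  · rw [getD_of_sub_tailLen_le hi (by omega), getD_of_sub_tailLen_le hj hjn]
    omega
  · rw [List.getD_eq_getElem _ _ (by omega), List.getD_eq_getElem _ _ (by omega)]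
    refine lt_of_mem_take_of_mem_drop_sub_tailLen hπ _ ?_ _ ?_
    · exact List.mem_iff_getElem.mpr ⟨i, by rw [List.length_take]; omega, List.getElem_take⟩
    · exact List.mem_iff_getElem.mpr
        ⟨j - (n - tailLen n π), by rw [List.length_drop]; omega,
          by rw [List.getElem_drop]; congr 1; omega⟩

lemma take_eq_take_append_getD_cons {α : Type*} {l : List α} {x₀ : α} {d k : ℕ}
    (hd : d < l.length) (hdk : d < k) :
    l.take k = l.take d ++ l.getD d x₀ :: (l.drop (d + 1)).take (k - d - 1) := by
  conv_lhs => rw [show k = d + 1 + (k - d - 1) by omega]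
  rw [List.take_add, ← List.take_concat_get' l d hd, List.getD_eq_getElem _ _ hd,
    List.append_assoc, List.singleton_append]

lemma exists_getD_eq_of_mem_take_drop {α : Type*} {l : List α} {x₀ y : α} {a b : ℕ}
    (hy : y ∈ (l.drop a).take b) : ∃ j, a ≤ j ∧ j < a + b ∧ l.getD j x₀ = y := by
  obtain ⟨i, hi, rfl⟩ := List.getElem_of_mem hy
  simp only [List.length_take, List.length_drop] at hi
  refine ⟨a + i, by omega, by omega, ?_⟩
  rw [List.getD_eq_getElem _ _ (by omega)]
  simp

lemma getD_ne_getD_of_nodup {α : Type*} {l : List α} {x₀ : α} (hl : l.Nodup) {i j : ℕ}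
    (hi : i < l.length) (hj : j < l.length) (hij : i ≠ j) : l.getD i x₀ ≠ l.getD j x₀ := by
  rw [List.getD_eq_getElem _ _ hi, List.getD_eq_getElem _ _ hj]
  exact fun h => hij (hl.getElem_inj_iff.mp h)

lemma sum_Ico_ite_eq_hookSum {l : List ℕ} {d k : ℕ} (hdk : d < k) (hk : k ≤ l.length)
    (hbelow : ∀ j, d < j → j < k → ¬ l.getD d 0 < l.getD j 0)
    (habove : ∀ j, k ≤ j → j < l.length → l.getD d 0 < l.getD j 0) :
    ∑ j ∈ Ico (d + 1) l.length,
      (if l.getD d 0 < l.getD j 0 then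
        fert (l.take (d + 1) ++ l.drop (j + 1)) * fert ((l.drop (d + 1)).take (j - d - 1))
      else 0) =
      hookSum (l.take d) (l.getD d 0) ((l.drop (d + 1)).take (k - d - 1)) (l.drop k) := by
  rw [← Finset.sum_Ico_consecutive _ (show d + 1 ≤ k by omega) hk,
    Finset.sum_eq_zero fun j hj =>
      if_neg (hbelow j (by have := mem_Ico.mp hj; omega) (mem_Ico.mp hj).2),
    zero_add, Finset.sum_Ico_eq_sum_range, hookSum, List.length_drop]
  refine Finset.sum_congr rfl fun i hi => ?_
  have hi : i < l.length - k := Finset.mem_range.mp hi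
  rw [if_pos (habove _ (by omega) (by omega)),
    take_eq_take_append_getD_cons (x₀ := 0) (d := d) (k := d + 1) (by omega) (by omega),
    List.drop_drop,
    show k + i - d - 1 = (k - d - 1) + i by omega, List.take_add, List.drop_drop]
  simp [show d + 1 + (k - d - 1) = k by omega, add_assoc]

/-- Positions are 0-indexed, and a hook of `SW_d(π)` is recorded by the position `j` of its
northeast endpoint. -/
theorem stmt19 (n : ℕ) (π : List ℕ) (hπ : π.Perm (List.range' 1 n))
    (d : ℕ) (hd : d + 1 < n) (hdesc : π.getD (d + 1) 0 < π.getD d 0)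
    (htb : ∀ j, d < j → j < n → π.getD d 0 < π.getD j 0 → n - tailLen n π ≤ j) :
    fert π = ∑ j ∈ Finset.Ico (d + 1) n,
      if π.getD d 0 < π.getD j 0 then
        fert (π.take (d + 1) ++ π.drop (j + 1)) * fert ((π.drop (d + 1)).take (j - d - 1))
      else 0 := by
  have hlen : π.length = n := by simpa using hπ.length_eq
  set k := n - tailLen n π with hk
  have hdk : d + 1 < k := by
    by_contra h
    exact hdesc.not_gt
      (getD_lt_getD_of_sub_tailLen_le (i := d) (j := d + 1) hπ (by omega) (by omega) hd)
  have htake := take_eq_take_append_getD_cons (l := π) (x₀ := 0) (d := d) (k := k) (by omega)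
    (by omega)
  subst hlen
  rw [sum_Ico_ite_eq_hookSum (k := k) (by omega) (by omega)
    (fun j h₁ h₂ h => by have := htb j h₁ (by omega) h; omega)
    (fun j h₁ h₂ => getD_lt_getD_of_sub_tailLen_le hπ (by omega) h₁ h₂)]
  conv_lhs => rw [← List.take_append_drop k π, htake]
  refine fert_append_cons_append_eq_hookSum ?_ ?_ ?_ ?_
  · rw [ne_eq, List.take_eq_nil_iff, List.drop_eq_nil_iff]
    omega
  · intro y hy
    obtain ⟨j, hdj, hjk, rfl⟩ := exists_getD_eq_of_mem_take_drop (x₀ := 0) hy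
    exact lt_of_le_of_ne (not_lt.mp fun h => by have := htb j (by omega) (by omega) h; omega)
      (getD_ne_getD_of_nodup (hπ.nodup_iff.mpr List.nodup_range') (by omega) (by omega)
        (by omega))
  · rw [hk, drop_sub_tailLen rfl]; exact List.pairwise_lt_range'
  · rw [← htake]; exact lt_of_mem_take_of_mem_drop_sub_tailLen hπ
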